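/- Let K be a field and f ∈ K[x_1,...,x_n] nonzero with order c at the origin (minimal total degree c), and let in_c(f) denote the degree-c homogeneous part of f. Under the blow-up substitution x_i -> x_i * x_n for i < n (the x_n-chart), x_n^c divides the substituted polynomial f(x_1 x_n, ..., x_{n-1} x_n, x_n), and the order at the origin of the weak transform f(x_1 x_n,...,x_{n-1} x_n, x_n)/x_n^c is at most the order at the origin of in_c(f)(x_1,...,x_{n-1},1). -/
import Mathlib


open MvPolynomial

/-- The order of a multivariate polynomial at the origin: the minimal total degree of a
monomial appearing with nonzero coefficient. -/
noncomputable def ordOrigin {K : Type*} [CommSemiring K] {σ : Type*}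
    (f : MvPolynomial σ K) : ℕ :=
  sInf {k | ∃ d ∈ f.support, (d.sum fun _ e => e) = k}

namespace Stmt18Aux

lemma ordOrigin_le {K : Type*} [CommSemiring K] {σ : Type*} {g : MvPolynomial σ K}
    {d : σ →₀ ℕ} (hd : d ∈ g.support) : ordOrigin g ≤ d.sum fun _ e => e :=
  Nat.sInf_le ⟨d, hd, rfl⟩

lemma exists_ordOrigin {K : Type*} [CommSemiring K] {σ : Type*} {g : MvPolynomial σ K}
    (hg : g ≠ 0) : ∃ d ∈ g.support, (d.sum fun _ e => e) = ordOrigin g := by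
  have hne : {k | ∃ d ∈ g.support, (d.sum fun _ e => e) = k}.Nonempty := by
    obtain ⟨d, hd⟩ := (MvPolynomial.support_nonempty).2 hg
    exact ⟨_, d, hd, rfl⟩
  exact Nat.sInf_mem hne

/-- sum of exponents away from the last variable -/
def sOff {n : ℕ} (d : Fin (n + 1) →₀ ℕ) : ℕ :=
  ∑ i ∈ Finset.univ.erase (Fin.last n), d i

/-- the exponent map induced by the blow-up substitution -/
noncomputable def Bmap {n : ℕ} (d : Fin (n + 1) →₀ ℕ) : Fin (n + 1) →₀ ℕ :=
  d + Finsupp.single (Fin.last n) (sOff d)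

lemma degree_eq_sum' {n : ℕ} (d : Fin (n + 1) →₀ ℕ) :
    d.degree = d.sum fun _ e => e := rfl

lemma deg_eq_sum {n : ℕ} (d : Fin (n + 1) →₀ ℕ) :
    (d.sum fun _ e => e) = ∑ i : Fin (n + 1), d i :=
  Finsupp.sum_fintype _ _ fun _ => rfl

/-- total degree split off the last variable -/
lemma deg_split {n : ℕ} (d : Fin (n + 1) →₀ ℕ) :
    (d.sum fun _ e => e) = sOff d + d (Fin.last n) := by
  rw [deg_eq_sum, sOff]
  exact (Finset.sum_erase_add _ _ (Finset.mem_univ _)).symm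

lemma Bmap_apply_ne {n : ℕ} (d : Fin (n + 1) →₀ ℕ) {i : Fin (n + 1)}
    (hi : i ≠ Fin.last n) : Bmap d i = d i := by
  rw [Bmap, Finsupp.add_apply, Finsupp.single_apply, if_neg (Ne.symm hi), add_zero]

lemma Bmap_apply_last {n : ℕ} (d : Fin (n + 1) →₀ ℕ) :
    Bmap d (Fin.last n) = d.sum fun _ e => e := by
  rw [Bmap, Finsupp.add_apply, Finsupp.single_eq_same, deg_split]
  omega

/-- The blow-up exponent map is injective. -/
lemma Bmap_inj {n : ℕ} : Function.Injective (Bmap (n := n)) := by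
  intro d d' h
  have hoff : ∀ i : Fin (n + 1), i ≠ Fin.last n → d i = d' i := by
    intro i hi
    have h1 := Bmap_apply_ne d hi
    have h2 := Bmap_apply_ne d' hi
    rw [← h1, ← h2, h]
  have hs : sOff d = sOff d' := by
    rw [sOff, sOff]
    exact Finset.sum_congr rfl fun i hi => hoff i (Finset.ne_of_mem_erase hi)
  have hlast : d (Fin.last n) = d' (Fin.last n) := by
    have h1 := Bmap_apply_last d
    have h2 := Bmap_apply_last d'
    rw [h, h2] at h1
    rw [deg_split, deg_split, hs] at h1
    omega
  ext i
  by_cases hi : i = Fin.last n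
  · rw [hi, hlast]
  · exact hoff i hi

variable {K : Type*} [CommSemiring K] {n : ℕ}

lemma prod_X_pow (d : Fin (n + 1) →₀ ℕ) :
    (∏ i : Fin (n + 1), (X i : MvPolynomial (Fin (n + 1)) K) ^ d i) = monomial d 1 := by
  rw [monomial_eq, C_1, one_mul, Finsupp.prod_fintype]
  intro i; exact pow_zero _

lemma prod_blowup (d : Fin (n + 1) →₀ ℕ) :
    (∏ i : Fin (n + 1),
        (if i = Fin.last n then X i else X i * X (Fin.last n) :
          MvPolynomial (Fin (n + 1)) K) ^ d i)
      = monomial (Bmap d) 1 := by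
  have h1 : ∀ i : Fin (n + 1),
      (if i = Fin.last n then X i else X i * X (Fin.last n) :
        MvPolynomial (Fin (n + 1)) K) ^ d i
        = X i ^ d i * (if i = Fin.last n then 1 else X (Fin.last n) ^ d i) := by
    intro i
    by_cases h : i = Fin.last n <;> simp [h, mul_pow]
  rw [Finset.prod_congr rfl fun i _ => h1 i, Finset.prod_mul_distrib, prod_X_pow]
  have h2 : (∏ i : Fin (n + 1),
      (if i = Fin.last n then 1 else X (Fin.last n) ^ d i : MvPolynomial (Fin (n + 1)) K))
      = X (Fin.last n) ^ sOff d := by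
    rw [← Finset.prod_erase (f := fun i : Fin (n + 1) =>
          (if i = Fin.last n then 1 else X (Fin.last n) ^ d i : MvPolynomial (Fin (n + 1)) K))
        (a := Fin.last n) Finset.univ (by simp),
      Finset.prod_congr rfl fun i hi => if_neg (Finset.ne_of_mem_erase hi),
      Finset.prod_pow_eq_pow_sum, sOff]
  rw [h2, X_pow_eq_monomial, monomial_mul, one_mul, Bmap]

lemma prod_chart (d : Fin (n + 1) →₀ ℕ) :
    (∏ i : Fin (n + 1),
        (if i = Fin.last n then 1 else X i : MvPolynomial (Fin (n + 1)) K) ^ d i)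
      = monomial (Finsupp.erase (Fin.last n) d) 1 := by
  have h1 : ∀ i : Fin (n + 1),
      (if i = Fin.last n then 1 else X i : MvPolynomial (Fin (n + 1)) K) ^ d i
        = X i ^ (Finsupp.erase (Fin.last n) d) i := by
    intro i
    by_cases h : i = Fin.last n
    · simp [h, Finsupp.erase_same]
    · simp [h, Finsupp.erase_ne h]
  rw [Finset.prod_congr rfl fun i _ => h1 i, prod_X_pow]

lemma aeval_eq_sum (φ : Fin (n + 1) → MvPolynomial (Fin (n + 1)) K)
    (f : MvPolynomial (Fin (n + 1)) K) :
    aeval φ f = ∑ d ∈ f.support, C (coeff d f) * ∏ i : Fin (n + 1), φ i ^ d i := by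
  conv_lhs => rw [f.as_sum]
  rw [map_sum]
  refine Finset.sum_congr rfl fun d _ => ?_
  rw [aeval_monomial, algebraMap_eq, Finsupp.prod_fintype]
  intro i; exact pow_zero _

lemma blowup_eq (f : MvPolynomial (Fin (n + 1)) K) :
    aeval (fun i => if i = Fin.last n then X i else X i * X (Fin.last n) :
        Fin (n + 1) → MvPolynomial (Fin (n + 1)) K) f
      = ∑ d ∈ f.support, monomial (Bmap d) (coeff d f) := by
  rw [aeval_eq_sum]
  refine Finset.sum_congr rfl fun d _ => ?_
  rw [prod_blowup, C_mul_monomial, mul_one]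

lemma chart_eq (f : MvPolynomial (Fin (n + 1)) K) :
    aeval (fun i => if i = Fin.last n then 1 else X i :
        Fin (n + 1) → MvPolynomial (Fin (n + 1)) K) f
      = ∑ d ∈ f.support, monomial (Finsupp.erase (Fin.last n) d) (coeff d f) := by
  rw [aeval_eq_sum]
  refine Finset.sum_congr rfl fun d _ => ?_
  rw [prod_chart, C_mul_monomial, mul_one]

end Stmt18Aux

open Stmt18Aux in
/-- Let `K` be a field and `f ∈ K[x_1,...,x_{n+1}]` nonzero of order `c` at the origin.
Under the blow-up substitution `x_i ↦ x_i * x_last` for `i < last` (the `x_last`-chart),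
`x_last^c` divides the substituted polynomial, and for any quotient `g` (the weak
transform), the order of `g` at the origin of the chart is at most the order at the
origin of `in_c(f)(x_1,...,x_n,1)`, where `in_c(f)` is the degree-`c` homogeneous part
of `f`. -/
theorem stmt18 (K : Type*) [Field K] (n : ℕ)
    (f : MvPolynomial (Fin (n + 1)) K) (hf : f ≠ 0)
    (c : ℕ) (hc : c = ordOrigin f) :
    (X (Fin.last n) ^ c ∣
      aeval (fun i => if i = Fin.last n then X i else X i * X (Fin.last n) :
          Fin (n + 1) → MvPolynomial (Fin (n + 1)) K) f) ∧
    ∀ g : MvPolynomial (Fin (n + 1)) K,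
      aeval (fun i => if i = Fin.last n then X i else X i * X (Fin.last n) :
          Fin (n + 1) → MvPolynomial (Fin (n + 1)) K) f
        = X (Fin.last n) ^ c * g →
      ordOrigin g ≤
        ordOrigin
          (aeval (fun i => if i = Fin.last n then 1 else X i :
              Fin (n + 1) → MvPolynomial (Fin (n + 1)) K)
            (homogeneousComponent c f)) := by
  classical
  -- every monomial of f has degree ≥ c
  have hge : ∀ d ∈ f.support, c ≤ d.sum fun _ e => e := by
    intro d hd
    rw [hc]
    exact Nat.sInf_le ⟨d, hd, rfl⟩
  -- divisibility
  have hdvd : (X (Fin.last n) : MvPolynomial (Fin (n + 1)) K) ^ c ∣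
      aeval (fun i => if i = Fin.last n then X i else X i * X (Fin.last n) :
          Fin (n + 1) → MvPolynomial (Fin (n + 1)) K) f := by
    rw [blowup_eq]
    refine Finset.dvd_sum fun d hd => ?_
    have hle : Finsupp.single (Fin.last n) c ≤ Bmap d := by
      rw [Finsupp.single_le_iff, Bmap_apply_last]
      exact hge d hd
    refine ⟨monomial (Bmap d - Finsupp.single (Fin.last n) c) (coeff d f), ?_⟩
    rw [X_pow_eq_monomial, monomial_mul, one_mul, add_tsub_cancel_of_le hle]
  refine ⟨hdvd, fun g hg => ?_⟩
  -- the right-hand side polynomial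
  set h := homogeneousComponent c f with hh
  have hsupp_h : ∀ d ∈ h.support, d ∈ f.support ∧ (d.sum fun _ e => e) = c := by
    intro d hd
    rw [MvPolynomial.mem_support_iff] at hd
    rw [hh, coeff_homogeneousComponent, degree_eq_sum'] at hd
    by_cases hdeg : (d.sum fun _ e => e) = c
    · rw [if_pos hdeg] at hd
      exact ⟨MvPolynomial.mem_support_iff.2 hd, hdeg⟩
    · rw [if_neg hdeg] at hd
      exact absurd rfl hd
  -- injectivity of erase on support of h
  have hE_inj : ∀ d ∈ h.support, ∀ d' ∈ h.support,
      Finsupp.erase (Fin.last n) d = Finsupp.erase (Fin.last n) d' → d = d' := by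
    intro d hd d' hd' he
    have hoff : ∀ i : Fin (n + 1), i ≠ Fin.last n → d i = d' i := by
      intro i hi
      have := DFunLike.congr_fun he i
      rwa [Finsupp.erase_ne hi, Finsupp.erase_ne hi] at this
    have hsd : sOff d = sOff d' := by
      rw [sOff, sOff]
      exact Finset.sum_congr rfl fun i hi => hoff i (Finset.ne_of_mem_erase hi)
    have h1 := (hsupp_h d hd).2
    have h2 := (hsupp_h d' hd').2
    rw [deg_split] at h1 h2
    rw [hsd] at h1
    ext i
    by_cases hi : i = Fin.last n
    · rw [hi]; omega
    · exact hoff i hi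
  -- h is nonzero and so is the chart evaluation of h
  have hne : (aeval (fun i => if i = Fin.last n then 1 else X i :
      Fin (n + 1) → MvPolynomial (Fin (n + 1)) K) h) ≠ 0 := by
    obtain ⟨d₀, hd₀, hdeg₀⟩ := exists_ordOrigin hf
    rw [← hc] at hdeg₀
    have hd₀h : d₀ ∈ h.support := by
      rw [MvPolynomial.mem_support_iff, hh, coeff_homogeneousComponent, degree_eq_sum',
        if_pos hdeg₀]
      exact MvPolynomial.mem_support_iff.1 hd₀
    intro h0
    have hco : coeff (Finsupp.erase (Fin.last n) d₀)
        (aeval (fun i => if i = Fin.last n then 1 else X i :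
          Fin (n + 1) → MvPolynomial (Fin (n + 1)) K) h) = coeff d₀ h := by
      rw [chart_eq, coeff_sum]
      rw [Finset.sum_eq_single_of_mem d₀ hd₀h]
      · rw [coeff_monomial, if_pos rfl]
      · intro d hd hne'
        rw [coeff_monomial, if_neg]
        intro heq
        exact hne' (hE_inj d hd d₀ hd₀h heq)
    rw [h0] at hco
    simp only [coeff_zero] at hco
    exact MvPolynomial.mem_support_iff.1 hd₀h hco.symm
  -- pick a monomial of the RHS achieving its order
  obtain ⟨e, he, hedeg⟩ := exists_ordOrigin hne
  -- e = erase L d₁ for some d₁ in supp h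
  have hce : coeff e (aeval (fun i => if i = Fin.last n then 1 else X i :
      Fin (n + 1) → MvPolynomial (Fin (n + 1)) K) h) ≠ 0 :=
    MvPolynomial.mem_support_iff.1 he
  rw [chart_eq, coeff_sum] at hce
  obtain ⟨d₁, hd₁, hcoeff₁⟩ := Finset.exists_ne_zero_of_sum_ne_zero hce
  rw [coeff_monomial] at hcoeff₁
  have hEd₁ : Finsupp.erase (Fin.last n) d₁ = e := by
    by_contra hne'
    rw [if_neg hne'] at hcoeff₁
    exact hcoeff₁ rfl
  obtain ⟨hd₁f, hd₁deg⟩ := hsupp_h d₁ hd₁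
  -- key identity of exponents : single L c + erase L d₁ = Bmap d₁
  have hexp : Finsupp.single (Fin.last n) c + Finsupp.erase (Fin.last n) d₁ = Bmap d₁ := by
    ext i
    by_cases hi : i = Fin.last n
    · subst hi
      rw [Finsupp.add_apply, Finsupp.single_eq_same, Finsupp.erase_same, add_zero,
        Bmap_apply_last, hd₁deg]
    · rw [Finsupp.add_apply, Finsupp.single_apply, if_neg (Ne.symm hi),
        Finsupp.erase_ne hi, Bmap_apply_ne d₁ hi, zero_add]
  -- coefficient of the blow-up transform at Bmap d₁
  have hcoefB : coeff (Bmap d₁)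
      (aeval (fun i => if i = Fin.last n then X i else X i * X (Fin.last n) :
          Fin (n + 1) → MvPolynomial (Fin (n + 1)) K) f) = coeff d₁ f := by
    rw [blowup_eq, coeff_sum]
    rw [Finset.sum_eq_single_of_mem d₁ hd₁f]
    · rw [coeff_monomial, if_pos rfl]
    · intro d hd hne'
      rw [coeff_monomial, if_neg]
      intro heq
      exact hne' (Bmap_inj heq)
  -- hence coefficient of g at erase L d₁ is coeff d₁ f ≠ 0
  have hcoefg : coeff (Finsupp.erase (Fin.last n) d₁) g = coeff d₁ f := by
    rw [← hcoefB, hg, X_pow_eq_monomial, ← hexp, coeff_monomial_mul, one_mul]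
  have hmemg : Finsupp.erase (Fin.last n) d₁ ∈ g.support := by
    rw [MvPolynomial.mem_support_iff, hcoefg]
    exact MvPolynomial.mem_support_iff.1 hd₁f
  calc ordOrigin g ≤ (Finsupp.erase (Fin.last n) d₁).sum fun _ e => e := ordOrigin_le hmemg
    _ = e.sum fun _ e => e := by rw [hEd₁]
    _ = _ := hedeg
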